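/- Let n and k be positive integers with k ≤ n − ⌈n/3⌉. Then the k-synchronous bondage number of the path on n vertices is: Sb_k(P_n) = ⌊(3k−1)/2⌋ if n ≡ 0 (mod 3); Sb_k(P_n) = ⌊(3k+1)/2⌋ if n ≡ 1 (mod 3); and Sb_k(P_n) = ⌈(3k−1)/2⌉ if n ≡ 2 (mod 3). -/

import Mathlib

/-- A finite set of vertices `D` is a dominating set of `G` if every vertex
is in `D` or adjacent to a vertex in `D`. -/
def SimpleGraph.IsDominatingSet {V : Type*} (G : SimpleGraph V) (D : Finset V) : Prop :=
  ∀ v : V, v ∈ D ∨ ∃ u ∈ D, G.Adj u v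

/-- The domination number of `G`: the minimum cardinality of a dominating set. -/
noncomputable def SimpleGraph.domNum {V : Type*} (G : SimpleGraph V) : ℕ :=
  sInf {n : ℕ | ∃ D : Finset V, G.IsDominatingSet D ∧ D.card = n}

/-- The `k`-synchronous bondage number of `G`: the minimum cardinality of a set of edges
whose deletion increases the domination number by exactly `k`.  (`Sb 1` is the classical
bondage number.) -/
noncomputable def SimpleGraph.synchBondage {V : Type*} (G : SimpleGraph V) (k : ℕ) : ℕ :=
  sInf {m : ℕ | ∃ E' : Finset (Sym2 V), ↑E' ⊆ G.edgeSet ∧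
    (G.deleteEdges ↑E').domNum = G.domNum + k ∧ E'.card = m}

/-!
Deleting `m` edges from `P_n` leaves at most `m + 1` subpaths, and a path on `L` vertices is
dominated by `⌈L / 3⌉ ≤ (L + 2) / 3` of them, so `3 γ(P_n - E') ≤ n + 2 m + 2`. Conversely,
deleting the first `M` edges isolates `M` vertices next to a copy of `P_{n - M}`, so the domination
number becomes `M + ⌈(n - M) / 3⌉`; this reaches `⌈n / 3⌉ + k` for the least `M` the bound allows.

A subgraph of `P_n` obtained by deleting edges is handled as the pullback to `Fin n` of a graph
`cutPath C` on `ℕ`, where `C` collects the smaller ends of the deleted edges.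
-/

open Finset

namespace SimpleGraph

variable {V : Type*} {G H : SimpleGraph V}

theorem IsDominatingSet.mono {D : Finset V} (hD : G.IsDominatingSet D) (hGH : G ≤ H) :
    H.IsDominatingSet D :=
  fun v => (hD v).imp_right fun ⟨u, hu, huv⟩ => ⟨u, hu, hGH huv⟩

theorem domNum_le_card {D : Finset V} (hD : G.IsDominatingSet D) : G.domNum ≤ D.card :=
  Nat.sInf_le ⟨D, hD, rfl⟩

theorem exists_isDominatingSet_card_eq_domNum [Fintype V] :
    ∃ D : Finset V, G.IsDominatingSet D ∧ D.card = G.domNum :=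
  Nat.sInf_mem (s := {n | ∃ D : Finset V, G.IsDominatingSet D ∧ D.card = n})
    ⟨_, univ, fun v => Or.inl (mem_univ v), rfl⟩

theorem le_domNum [Fintype V] {m : ℕ} (h : ∀ D, G.IsDominatingSet D → m ≤ D.card) :
    m ≤ G.domNum := by
  obtain ⟨D, hD, hcard⟩ := G.exists_isDominatingSet_card_eq_domNum
  exact hcard ▸ h D hD

theorem domNum_anti [Fintype V] (hGH : G ≤ H) : H.domNum ≤ G.domNum := by
  obtain ⟨D, hD, hcard⟩ := G.exists_isDominatingSet_card_eq_domNum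
  exact hcard ▸ domNum_le_card (hD.mono hGH)

theorem synchBondage_le_card {k : ℕ} {E : Finset (Sym2 V)} (hE : ↑E ⊆ G.edgeSet)
    (hk : (G.deleteEdges ↑E).domNum = G.domNum + k) : G.synchBondage k ≤ E.card :=
  Nat.sInf_le ⟨E, hE, hk, rfl⟩

theorem le_synchBondage {k m : ℕ}
    (hne : ∃ E : Finset (Sym2 V), ↑E ⊆ G.edgeSet ∧ (G.deleteEdges ↑E).domNum = G.domNum + k)
    (h : ∀ E : Finset (Sym2 V), ↑E ⊆ G.edgeSet → (G.deleteEdges ↑E).domNum = G.domNum + k →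
      m ≤ E.card) :
    m ≤ G.synchBondage k := by
  obtain ⟨E, hE, hk⟩ := hne
  refine le_csInf ⟨_, E, hE, hk, rfl⟩ ?_
  rintro _ ⟨E', hE', hk', rfl⟩
  exact h E' hE' hk'

def cutPath (C : Set ℕ) : SimpleGraph ℕ where
  Adj u v := (u + 1 = v ∨ v + 1 = u) ∧ min u v ∉ C
  symm := ⟨fun u v h => by rwa [or_comm, min_comm]⟩
  loopless := ⟨fun u h => by omega⟩

@[simp]
theorem cutPath_adj {C : Set ℕ} {u v : ℕ} :
    (cutPath C).Adj u v ↔ (u + 1 = v ∨ v + 1 = u) ∧ min u v ∉ C :=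
  Iff.rfl

def pathDomSet (a b : ℕ) : Finset ℕ :=
  (range ((b - a + 2) / 3)).image fun j => min (a + 3 * j + 1) (b - 1)

theorem pathDomSet_subset_Ico (a b : ℕ) : pathDomSet a b ⊆ Ico a b := by
  intro u hu
  obtain ⟨j, hj, rfl⟩ := mem_image.1 hu
  rw [mem_range] at hj
  rw [mem_Ico]
  omega

theorem card_pathDomSet_le (a b : ℕ) : (pathDomSet a b).card ≤ (b - a + 2) / 3 :=
  card_image_le.trans (card_range _).le

theorem pathDomSet_dominates {C : Set ℕ} {a b v : ℕ} (hC : ∀ c ∈ C, c < a) (hav : a ≤ v)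
    (hvb : v < b) : v ∈ pathDomSet a b ∨ ∃ u ∈ pathDomSet a b, (cutPath C).Adj u v := by
  obtain ⟨u, hu_def⟩ : ∃ u, u = min (a + 3 * ((v - a) / 3) + 1) (b - 1) := ⟨_, rfl⟩
  have hu : u ∈ pathDomSet a b := mem_image.2 ⟨(v - a) / 3, mem_range.2 (by omega), hu_def.symm⟩
  by_cases huv : u = v
  · exact Or.inl (huv ▸ hu)
  · refine Or.inr ⟨u, hu, by omega, fun hmin => ?_⟩
    have := hC _ hmin
    omega

theorem exists_dominating_cutPath (C : Finset ℕ) (b : ℕ) :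
    ∃ D ⊆ range b, (∀ v < b, v ∈ D ∨ ∃ u ∈ D, (cutPath C).Adj u v) ∧
      3 * D.card ≤ b + 2 * C.card + 2 := by
  -- Peel off the largest cut `c`: induction covers `[0, c]`, and `[c + 1, b)` is uncut.
  induction C using Finset.induction_on_max generalizing b with
  | empty =>
    refine ⟨pathDomSet 0 b, fun u hu => ?_, fun v hv => ?_, ?_⟩
    · simpa using (mem_Ico.1 (pathDomSet_subset_Ico 0 b hu)).2
    · exact pathDomSet_dominates (by simp) (Nat.zero_le v) hv
    · have := card_pathDomSet_le 0 b
      omega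
  | insert c C hlt ih =>
    have hcard : (insert c C).card = C.card + 1 := card_insert_of_notMem fun h => (hlt c h).false
    have hadj {u v : ℕ} (huv : (cutPath C).Adj u v) (hc : min u v ≠ c) :
        (cutPath ↑(insert c C)).Adj u v := by
      simp_all
    by_cases hb : b ≤ c + 1
    · obtain ⟨D, hDb, hdom, hDcard⟩ := ih b
      refine ⟨D, hDb, fun v hv => (hdom v hv).imp_right ?_, by omega⟩
      rintro ⟨u, hu, huv⟩
      have := mem_range.1 (hDb hu)
      exact ⟨u, hu, hadj huv (by simp at huv; omega)⟩
    · obtain ⟨D, hDb, hdom, hDcard⟩ := ih (c + 1)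
      refine ⟨D ∪ pathDomSet (c + 1) b, union_subset (hDb.trans ?_) fun u hu => ?_,
        fun v hv => ?_, ?_⟩
      · exact range_subset_range.2 (by omega)
      · have := mem_Ico.1 (pathDomSet_subset_Ico _ _ hu)
        exact mem_range.2 this.2
      · by_cases hvc : v < c + 1
        · rcases hdom v hvc with hvD | ⟨u, hu, huv⟩
          · exact Or.inl (mem_union_left _ hvD)
          · have := mem_range.1 (hDb hu)
            exact Or.inr ⟨u, mem_union_left _ hu, hadj huv (by simp at huv; omega)⟩
        · have hC : ∀ x ∈ (↑(insert c C) : Set ℕ), x < c + 1 := fun x hx => by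
            rcases mem_insert.1 hx with rfl | hx
            · omega
            · exact (hlt x hx).trans (by omega)
          rcases pathDomSet_dominates hC (by omega) hv with hvD | ⟨u, hu, huv⟩
          · exact Or.inl (mem_union_right _ hvD)
          · exact Or.inr ⟨u, mem_union_right _ hu, huv⟩
      · have := card_union_le D (pathDomSet (c + 1) b)
        have := card_pathDomSet_le (c + 1) b
        omega

theorem card_le_three_mul_card {s D : Finset ℕ} (h : ∀ v ∈ s, ∃ u ∈ D, v ≤ u + 1 ∧ u ≤ v + 1) :
    s.card ≤ 3 * D.card :=
  calc s.card ≤ (D.biUnion fun u => Icc (u - 1) (u + 1)).card := card_le_card fun v hv => by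
          obtain ⟨u, hu, h1, h2⟩ := h v hv
          exact mem_biUnion.2 ⟨u, hu, mem_Icc.2 ⟨by omega, h1⟩⟩
    _ ≤ ∑ u ∈ D, (Icc (u - 1) (u + 1)).card := card_biUnion_le
    _ ≤ ∑ _u ∈ D, 3 := sum_le_sum fun u _ => by rw [Nat.card_Icc]; omega
    _ = 3 * D.card := by rw [sum_const, smul_eq_mul, mul_comm]

theorem le_card_of_dominates_cutPath_Iio {M n : ℕ} {D : Finset ℕ} (hMn : M ≤ n)
    (hD : ∀ v < n, v ∈ D ∨ ∃ u ∈ D, (cutPath (Set.Iio M)).Adj u v) :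
    M + (n - M + 2) / 3 ≤ D.card := by
  have hisolated : range M ⊆ D := fun v hv => by
    rw [mem_range] at hv
    refine (hD v (by omega)).resolve_right ?_
    rintro ⟨u, -, -, hmin⟩
    exact hmin (by simp; omega)
  have htail : (Ico M n).card ≤ 3 * (D.filter (M ≤ ·)).card :=
    card_le_three_mul_card fun v hv => by
      rw [mem_Ico] at hv
      rcases hD v hv.2 with hvD | ⟨u, hu, hadj, hmin⟩
      · exact ⟨v, mem_filter.2 ⟨hvD, hv.1⟩, by omega, by omega⟩
      · simp only [Set.mem_Iio, not_lt, le_min_iff] at hmin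
        exact ⟨u, mem_filter.2 ⟨hu, hmin.1⟩, by omega, by omega⟩
  have hsplit : M + (D.filter (M ≤ ·)).card ≤ D.card :=
    calc M + (D.filter (M ≤ ·)).card = (range M ∪ D.filter (M ≤ ·)).card := by
          rw [card_union_of_disjoint, card_range]
          refine Finset.disjoint_left.2 fun v hv hv' => ?_
          have := (mem_filter.1 hv').2
          rw [mem_range] at hv
          omega
      _ ≤ D.card := card_le_card (union_subset hisolated (filter_subset _ _))
  rw [Nat.card_Ico] at htail
  omega

theorem domNum_comap_val_le {G : SimpleGraph ℕ} {n : ℕ} {D : Finset ℕ} (hDn : ∀ u ∈ D, u < n)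
    (hD : ∀ v < n, v ∈ D ∨ ∃ u ∈ D, G.Adj u v) :
    (G.comap (Fin.val : Fin n → ℕ)).domNum ≤ D.card := by
  rw [← card_attachFin D hDn]
  refine domNum_le_card fun v => (hD v v.isLt).imp (mem_attachFin hDn).2 ?_
  rintro ⟨u, hu, huv⟩
  exact ⟨⟨u, hDn u hu⟩, (mem_attachFin hDn).2 hu, huv⟩

theorem domNum_comap_cutPath_Iio {n M : ℕ} (hMn : M ≤ n) :
    ((cutPath (Set.Iio M)).comap (Fin.val : Fin n → ℕ)).domNum = M + (n - M + 2) / 3 := by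
  apply le_antisymm
  · calc _ ≤ (range M ∪ pathDomSet M n).card := domNum_comap_val_le ?_ ?_
      _ ≤ M + (n - M + 2) / 3 := by
          have := card_union_le (range M) (pathDomSet M n)
          have := card_pathDomSet_le M n
          rw [card_range] at *
          omega
    · intro u hu
      rcases mem_union.1 hu with hu | hu
      · exact (mem_range.1 hu).trans_le hMn
      · exact (mem_Ico.1 (pathDomSet_subset_Ico _ _ hu)).2
    · intro v hv
      by_cases hvM : v < M
      · exact Or.inl (mem_union_left _ (mem_range.2 hvM))
      · exact (pathDomSet_dominates (fun c hc => hc) (not_lt.1 hvM) hv).imp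
          (mem_union_right _) fun ⟨u, hu, huv⟩ => ⟨u, mem_union_right _ hu, huv⟩
  · refine le_domNum fun D hD => ?_
    rw [← card_map Fin.valEmbedding]
    refine le_card_of_dominates_cutPath_Iio hMn fun v hv => ?_
    rcases hD ⟨v, hv⟩ with h | ⟨u, hu, huv⟩
    · exact Or.inl (mem_map_of_mem _ h)
    · exact Or.inr ⟨u, mem_map_of_mem _ hu, huv⟩

/-- Only the members that are edges of `P_n`, namely the `{c, c + 1}` with `c ∈ C`, matter to
`deleteEdges`. -/
def cutEdges (n : ℕ) (C : Set ℕ) : Set (Sym2 (Fin n)) := {e | (e.inf : ℕ) ∈ C}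

theorem pathGraph_deleteEdges_cutEdges (n : ℕ) (C : Set ℕ) :
    (pathGraph n).deleteEdges (cutEdges n C) = (cutPath C).comap Fin.val := by
  ext u v
  simp [cutEdges, pathGraph_adj]

theorem injOn_inf_edgeSet_pathGraph (n : ℕ) :
    Set.InjOn (fun e : Sym2 (Fin n) => (e.inf : ℕ)) (pathGraph n).edgeSet := by
  intro e he e' he' h
  induction e using Sym2.ind
  induction e' using Sym2.ind
  simp only [mem_edgeSet, pathGraph_adj, Sym2.inf_mk, Fin.coe_min] at he he' h
  simp only [Sym2.eq_iff, Fin.ext_iff]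
  omega

theorem domNum_pathGraph (n : ℕ) : (pathGraph n).domNum = (n + 2) / 3 := by
  have h := domNum_comap_cutPath_Iio (n := n) (Nat.zero_le n)
  rw [← pathGraph_deleteEdges_cutEdges] at h
  simpa [cutEdges] using h

theorem three_mul_domNum_pathGraph_deleteEdges_le (n : ℕ) (E : Finset (Sym2 (Fin n))) :
    3 * ((pathGraph n).deleteEdges ↑E).domNum ≤ n + 2 * E.card + 2 := by
  set C := E.image fun e => (e.inf : ℕ)
  obtain ⟨D, hDn, hdom, hcard⟩ := exists_dominating_cutPath C n
  have hsub : ↑E ⊆ cutEdges n ↑C := fun e he => mem_coe.2 (mem_image_of_mem _ he)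
  have hle : (cutPath ↑C).comap Fin.val ≤ (pathGraph n).deleteEdges ↑E :=
    pathGraph_deleteEdges_cutEdges n C ▸ deleteEdges_anti hsub
  have hγ := (domNum_anti hle).trans (domNum_comap_val_le (fun u hu => mem_range.1 (hDn hu)) hdom)
  have hC : C.card ≤ E.card := card_image_le
  omega

theorem synchBondage_pathGraph_eq {n k M : ℕ} (hMn : M ≤ n)
    (hγ : M + (n - M + 2) / 3 = (n + 2) / 3 + k)
    (hmin : ∀ m, 3 * ((n + 2) / 3 + k) ≤ n + 2 * m + 2 → M ≤ m) :
    (pathGraph n).synchBondage k = M := by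
  obtain ⟨E, hE⟩ :=
    (Set.toFinite ((pathGraph n).edgeSet ∩ cutEdges n (Set.Iio M))).exists_finset_coe
  have hEsub : ↑E ⊆ (pathGraph n).edgeSet := hE ▸ Set.inter_subset_left
  have hEdom : ((pathGraph n).deleteEdges ↑E).domNum = (pathGraph n).domNum + k := by
    rw [hE, Set.inter_comm, ← deleteEdges_eq_inter_edgeSet, pathGraph_deleteEdges_cutEdges,
      domNum_comap_cutPath_Iio hMn, domNum_pathGraph, hγ]
  have hEcard : E.card ≤ M :=
    calc E.card ≤ (range M).card := card_le_card_of_injOn _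
          (fun e he => by
            rw [hE] at he
            exact mem_coe.2 (mem_range.2 he.2))
          ((injOn_inf_edgeSet_pathGraph n).mono hEsub)
      _ = M := card_range M
  refine le_antisymm ((synchBondage_le_card hEsub hEdom).trans hEcard)
    (le_synchBondage ⟨E, hEsub, hEdom⟩ fun E' _ hE' => hmin _ ?_)
  simpa [hE', domNum_pathGraph] using three_mul_domNum_pathGraph_deleteEdges_le n E'

end SimpleGraph

theorem synchBondage_pathGraph_general (n k : ℕ)
    (hkn : k ≤ n - (n + 2) / 3) :
    (n % 3 = 0 → (SimpleGraph.pathGraph n).synchBondage k = (3 * k - 1) / 2) ∧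
    (n % 3 = 1 → (SimpleGraph.pathGraph n).synchBondage k = (3 * k + 1) / 2) ∧
    (n % 3 = 2 → (SimpleGraph.pathGraph n).synchBondage k = 3 * k / 2) := by
  refine ⟨fun hr => ?_, fun hr => ?_, fun hr => ?_⟩ <;>
    exact SimpleGraph.synchBondage_pathGraph_eq (by omega) (by omega) fun m hm => by omega

/-- the `k`-synchronous bondage number of the path `P_n`
(for `1 ≤ k ≤ n − ⌈n/3⌉`) is `⌊(3k−1)/2⌋`, `⌊(3k+1)/2⌋`, or `⌈(3k−1)/2⌉ = ⌊3k/2⌋`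
according to whether `n ≡ 0, 1, 2 (mod 3)`. -/
theorem synchBondage_pathGraph (n k : ℕ) (hn : 1 ≤ n) (hk : 1 ≤ k)
    (hkn : k ≤ n - (n + 2) / 3) :
    (n % 3 = 0 → (SimpleGraph.pathGraph n).synchBondage k = (3 * k - 1) / 2) ∧
    (n % 3 = 1 → (SimpleGraph.pathGraph n).synchBondage k = (3 * k + 1) / 2) ∧
    (n % 3 = 2 → (SimpleGraph.pathGraph n).synchBondage k = 3 * k / 2) :=
  synchBondage_pathGraph_general n k hkn
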